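/- arXiv:2510.27290 — 2 statements merged into one kernel-verified Lean document; each statement's English description precedes it below -/
import Mathlib

section
/- Let S = {±a_1,…,±a_n} where 0 < a_1 < … < a_n and gcd(a_1,…,a_n) = 1. If all of a_1,…,a_n are odd, then χ(a_1,…,a_n) = 3. -/
/-- The shift action of `ℤ` on `α^ℤ`: `(s · x)(n) = x(n + s)`. -/
def shift {α : Type*} (s : ℤ) (x : ℤ → α) : ℤ → α := fun n => x (n + s)

/-- The free part `F(2^ℤ)` of the shift action on `2^ℤ = (ℤ → Bool)`. -/
def FreePart : Set (ℤ → Bool) := {x | ∀ s : ℤ, s ≠ 0 → shift s x ≠ x}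

/-- `c` is a Borel proper coloring of the Schreier graph `G_S` on `F(2^ℤ)`,
where `S = {±a : a ∈ A}`: `c` is Borel and `c(x) ≠ c(s · x)` for all `x` and `s ∈ S`. -/
def IsBorelColoring (A : Finset ℕ) {k : ℕ}
    (c : {x : ℤ → Bool // x ∈ FreePart} → Fin k) : Prop :=
  Measurable c ∧
    ∀ (x : {x : ℤ → Bool // x ∈ FreePart}) (a : ℕ), a ∈ A →
      ∀ (h : shift (a : ℤ) x.1 ∈ FreePart), c x ≠ c ⟨shift (a : ℤ) x.1, h⟩

/-- The Borel chromatic number `χ(a₁, …, aₙ)` of the Schreier graph `G_S` on `F(2^ℤ)`,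
where `S = {±a : a ∈ A}`: the least `k` admitting a Borel proper `k`-coloring. -/
noncomputable def borelChromatic (A : Finset ℕ) : ℕ :=
  sInf {k : ℕ | ∃ c : {x : ℤ → Bool // x ∈ FreePart} → Fin k, IsBorelColoring A c}

/-!
Upper bound: choose a Borel set of markers in `F(2^ℤ)`, maximal among the sets whose points in
a common orbit are at least `6m` apart, where `m ≥ max A`. A point at distance `l` past the
last marker, the preceding gap having length `g`, is colored `0/2` according to the parity of
`l + g` if `l < 2m`, then `(g mod 2)/2` by the same rule if `l < 4m`, and `0/1` according to
the parity of `l` afterwards. An odd step `a ≤ m` inside a gap changes both parities; a step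
across a marker lands at `l'` with `l' + g' = l + a`, so the `0/2` pattern of the new gap is in
phase with the `0/1` pattern ending the old one. Gaps are at least `6m` long, so no step jumps
over a whole gap.

Lower bound: in a Borel 2-coloring every generator flips the color, since all of them are odd;
as they generate `ℤ`, the shift by `s` changes the color by `s mod 2`. The class of color `0`
is then invariant under the even shifts, and the shift by `1` maps it onto the other class.
The even shifts are topologically mixing, so a Baire measurable invariant set is meagre or
comeagre; neither is possible for two disjoint classes exchanged by a homeomorphism and
covering the comeagre set `F(2^ℤ)`.
-/

open Filter Topology

section Shift

variable {α : Type*}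

@[simp]
theorem shift_apply (s : ℤ) (x : ℤ → α) (n : ℤ) : shift s x n = x (n + s) := rfl

@[simp]
theorem shift_zero (x : ℤ → α) : shift 0 x = x := by
  funext n
  simp

@[simp]
theorem shift_shift (s t : ℤ) (x : ℤ → α) : shift s (shift t x) = shift (t + s) x := by
  funext n
  simp [add_assoc, add_comm s]

theorem continuous_shift [TopologicalSpace α] (s : ℤ) :
    Continuous (shift s : (ℤ → α) → ℤ → α) :=
  continuous_pi fun n => continuous_apply (n + s)

theorem measurable_shift [MeasurableSpace α] (s : ℤ) :
    Measurable (shift s : (ℤ → α) → ℤ → α) :=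
  measurable_pi_lambda _ fun n => measurable_pi_apply (n + s)

def shiftHomeomorph [TopologicalSpace α] (s : ℤ) : (ℤ → α) ≃ₜ (ℤ → α) where
  toFun := shift s
  invFun := shift (-s)
  left_inv x := by simp
  right_inv x := by simp
  continuous_toFun := continuous_shift s
  continuous_invFun := continuous_shift (-s)

theorem tendsto_shift_residual [TopologicalSpace α] (s : ℤ) :
    Tendsto (shift s) (residual (ℤ → α)) (residual (ℤ → α)) :=
  tendsto_residual_of_isOpenMap (continuous_shift s) (shiftHomeomorph s).isOpenMap

theorem isClosed_setOf_shift_eq [TopologicalSpace α] [T2Space α] (s : ℤ) :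
    IsClosed {x : ℤ → α | shift s x = x} :=
  isClosed_eq (continuous_shift s) continuous_id

theorem exists_finset_forall_eq_subset [TopologicalSpace α] {U : Set (ℤ → α)} (hU : IsOpen U)
    {x : ℤ → α} (hx : x ∈ U) : ∃ F : Finset ℤ, {y | ∀ i ∈ F, y i = x i} ⊆ U := by
  obtain ⟨F, u, hu, hFu⟩ := isOpen_pi_iff.1 hU x hx
  exact ⟨F, fun y hy => hFu fun i hi => hy i hi ▸ (hu i hi).2⟩

theorem dense_iUnion_preimage_shift_mul [TopologicalSpace α] {p : ℤ} (hp : p ≠ 0)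
    {U : Set (ℤ → α)} (hU : IsOpen U) (hne : U.Nonempty) :
    Dense (⋃ k : ℤ, shift (p * k) ⁻¹' U) := by
  refine dense_iff_inter_open.2 fun W hW ⟨y, hy⟩ => ?_
  obtain ⟨x, hx⟩ := hne
  obtain ⟨G, hG⟩ := exists_finset_forall_eq_subset hW hy
  obtain ⟨F, hF⟩ := exists_finset_forall_eq_subset hU hx
  obtain ⟨k, hk⟩ : ∃ k : ℤ, ∀ i ∈ F, i + p * k ∉ G := by
    set B := (F ∪ G).sup Int.natAbs
    refine ⟨2 * B + 1, fun i hi hiG => ?_⟩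
    have hiB : i.natAbs ≤ B := Finset.le_sup (f := Int.natAbs) (Finset.mem_union_left G hi)
    have hiG : (i + p * (2 * B + 1)).natAbs ≤ B :=
      Finset.le_sup (f := Int.natAbs) (Finset.mem_union_right F hiG)
    have hpk : 2 * B + 1 ≤ (p * (2 * B + 1)).natAbs := by
      rw [Int.natAbs_mul]
      exact Nat.le_mul_of_pos_left _ (Int.natAbs_pos.2 hp)
    generalize p * (2 * B + 1) = q at hiG hpk
    omega
  classical
  refine ⟨fun i => if i ∈ G then y i else x (i - p * k), hG fun i hi => if_pos hi,
    Set.mem_iUnion.2 ⟨k, hF fun i hi => ?_⟩⟩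
  simp [hk i hi]

theorem BaireMeasurableSet.mem_residual_of_shift_invariant [TopologicalSpace α]
    {S : Set (ℤ → α)} (hS : BaireMeasurableSet S) {p : ℤ} (hp : p ≠ 0)
    (hinv : ∀ k : ℤ, shift (p * k) ⁻¹' S = S) (hnm : ¬IsMeagre S) : S ∈ residual (ℤ → α) := by
  obtain ⟨U, hU, hSU⟩ := hS.residualEq_isOpen
  rw [eventuallyEq_set] at hSU
  have hUne : U.Nonempty := by
    refine Set.nonempty_iff_ne_empty.2 fun hU₀ => hnm ?_
    filter_upwards [hSU] with x hx
    simpa [hU₀] using hx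
  have hD : ⋃ k : ℤ, shift (p * k) ⁻¹' U ∈ residual (ℤ → α) :=
    residual_of_dense_open (isOpen_iUnion fun k => hU.preimage (continuous_shift _))
      (dense_iUnion_preimage_shift_mul hp hU hUne)
  have hshift : ∀ᶠ x in residual (ℤ → α), ∀ k : ℤ, (shift (p * k) x ∈ S ↔ shift (p * k) x ∈ U) :=
    eventually_countable_forall.2 fun k => (tendsto_shift_residual (p * k)).eventually hSU
  filter_upwards [hshift, hD] with x hx hxD
  obtain ⟨k, hk⟩ := Set.mem_iUnion.1 hxD
  rw [← hinv k]
  exact (hx k).2 hk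

end Shift

theorem shift_mem_freePart_iff {x : ℤ → Bool} (s : ℤ) :
    shift s x ∈ FreePart ↔ x ∈ FreePart := by
  have key : ∀ (s : ℤ) {x : ℤ → Bool}, x ∈ FreePart → shift s x ∈ FreePart := by
    intro s x hx t ht h
    refine hx t ht ?_
    simpa [add_comm] using congrArg (shift (-s)) h
  exact ⟨fun h => by simpa using key (-s) h, key s⟩

theorem compl_freePart :
    FreePartᶜ = ⋃ s : ℤ, ⋃ (_ : s ≠ 0), {x : ℤ → Bool | shift s x = x} := by
  ext x
  simp [FreePart]

theorem measurableSet_freePart : MeasurableSet FreePart := by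
  refine MeasurableSet.of_compl ?_
  rw [compl_freePart]
  exact .iUnion fun s => .iUnion fun _ => (isClosed_setOf_shift_eq s).measurableSet

theorem isMeagre_setOf_shift_eq {s : ℤ} (hs : s ≠ 0) :
    IsMeagre {x : ℤ → Bool | shift s x = x} := by
  refine IsNowhereDense.isMeagre ((isClosed_setOf_shift_eq s).isNowhereDense_iff.2 ?_)
  refine Set.eq_empty_iff_forall_notMem.2 fun x hx => ?_
  obtain ⟨U, hUsub, hU, hxU⟩ := mem_interior.1 hx
  obtain ⟨F, hF⟩ := exists_finset_forall_eq_subset hU hxU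
  obtain ⟨n, hn⟩ := Infinite.exists_notMem_finset F
  -- `y` agrees with `x` on `F` but `y n ≠ y (n + s)`.
  set y := Function.update x n (!x (n + s))
  have hy : shift s y n = y n := congrFun (hUsub (hF fun i hi => by
    simp [y, Function.update_of_ne (ne_of_mem_of_not_mem hi hn)])) n
  simp [y, Function.update_of_ne (by omega : n + s ≠ n)] at hy

theorem isMeagre_compl_freePart : IsMeagre FreePartᶜ := by
  rw [compl_freePart]
  exact isMeagre_iUnion fun s => isMeagre_iUnion fun hs => isMeagre_setOf_shift_eq hs

def freeShift (s : ℤ) (x : FreePart) : FreePart :=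
  ⟨shift s x, (shift_mem_freePart_iff s).2 x.2⟩

@[simp]
theorem freeShift_zero (x : FreePart) : freeShift 0 x = x :=
  Subtype.ext (shift_zero x.1)

theorem freeShift_freeShift (s t : ℤ) (x : FreePart) :
    freeShift s (freeShift t x) = freeShift (t + s) x :=
  Subtype.ext (shift_shift s t x.1)

theorem AddSubgroup.eq_top_of_gcd_eq_one {H : AddSubgroup ℤ} {A : Finset ℕ}
    (hA : ∀ a ∈ A, (a : ℤ) ∈ H) (hgcd : A.gcd id = 1) : H = ⊤ := by
  obtain ⟨g, rfl⟩ := Int.subgroup_cyclic H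
  rw [← AddSubgroup.zmultiples_eq_closure] at hA ⊢
  have hg : g.natAbs ∣ A.gcd id :=
    Finset.dvd_gcd fun a ha => Int.natAbs_dvd_natAbs.2 (Int.mem_zmultiples_iff.1 (hA a ha))
  rw [hgcd, Nat.dvd_one] at hg
  refine eq_top_iff.2 fun s _ => Int.mem_zmultiples_iff.2 ?_
  rw [← Int.natAbs_dvd, hg]
  exact one_dvd s

section TwoColorings

open Fin.CommRing

def parityShifts (c : FreePart → Fin 2) : AddSubgroup ℤ where
  carrier := {s | ∀ x, c (freeShift s x) = c x + s}
  zero_mem' x := by simp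
  add_mem' {s t} hs ht x := by
    rw [← freeShift_freeShift, ht, hs]
    push_cast
    ring
  neg_mem' {s} hs x := by
    have h := hs (freeShift (-s) x)
    rw [freeShift_freeShift, neg_add_cancel, freeShift_zero] at h
    rw [eq_sub_of_add_eq h.symm]
    push_cast
    ring

theorem color_freeShift_eq_add {A : Finset ℕ} (hgcd : A.gcd id = 1) (hodd : ∀ a ∈ A, Odd a)
    {c : FreePart → Fin 2} (hc : ∀ x, ∀ a ∈ A, c x ≠ c (freeShift a x)) (s : ℤ)
    (x : FreePart) : c (freeShift s x) = c x + s := by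
  have hA : ∀ a ∈ A, (a : ℤ) ∈ parityShifts c := by
    intro a ha x
    obtain ⟨k, rfl⟩ := hodd a ha
    have hone : (((2 * k + 1 : ℕ) : ℤ) : Fin 2) = 1 := by
      push_cast
      simp
    have hne : ∀ u v : Fin 2, u ≠ v → v = u + 1 := by decide
    rw [hone]
    exact hne _ _ (hc x _ ha)
  have hs : s ∈ parityShifts c :=
    AddSubgroup.eq_top_of_gcd_eq_one hA hgcd ▸ AddSubgroup.mem_top s
  exact hs x

theorem not_baireMeasurableSet_of_shift_one {S : Set (ℤ → Bool)}
    (heven : ∀ k : ℤ, shift (2 * k) ⁻¹' S = S) (hdisj : Disjoint S (shift 1 ⁻¹' S))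
    (hcover : FreePart ⊆ S ∪ shift 1 ⁻¹' S) : ¬BaireMeasurableSet S := by
  intro hS
  have huniv : ¬IsMeagre (Set.univ : Set (ℤ → Bool)) :=
    not_isMeagre_of_isOpen isOpen_univ Set.univ_nonempty
  by_cases hmeagre : IsMeagre S
  · refine huniv (((hmeagre.union (tendsto_shift_residual 1 hmeagre)).union
      isMeagre_compl_freePart).mono fun x _ => ?_)
    by_cases hx : x ∈ FreePart
    exacts [Or.inl (hcover hx), Or.inr hx]
  · have h0 := hS.mem_residual_of_shift_invariant two_ne_zero heven hmeagre
    have h1 : shift 1 ⁻¹' S ∈ residual (ℤ → Bool) := tendsto_shift_residual 1 h0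
    apply huniv
    simpa [IsMeagre, hdisj.inter_eq] using inter_mem h0 h1

theorem not_isBorelColoring_two {A : Finset ℕ} (hgcd : A.gcd id = 1) (hodd : ∀ a ∈ A, Odd a)
    (c : FreePart → Fin 2) : ¬IsBorelColoring A c := by
  rintro ⟨hmeas, hproper⟩
  have hflip := color_freeShift_eq_add hgcd hodd fun x a ha => hproper x a ha _
  set S : Fin 2 → Set (ℤ → Bool) := fun b => {x | ∃ h : x ∈ FreePart, c ⟨x, h⟩ = b}
  have hS : ∀ s b, shift s ⁻¹' S b = S (b - s) := by
    intro s b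
    ext x
    refine ⟨fun ⟨hx, hb⟩ => ⟨(shift_mem_freePart_iff s).1 hx, ?_⟩, fun ⟨hx, hb⟩ =>
      ⟨(shift_mem_freePart_iff s).2 hx, ?_⟩⟩
    · rw [eq_sub_iff_add_eq, ← hb]
      exact (hflip s ⟨x, _⟩).symm
    · exact (hflip s ⟨x, hx⟩).trans (by rw [hb]; ring)
  have hSm : MeasurableSet (S 0) := by
    convert measurableSet_freePart.subtype_image (hmeas (measurableSet_singleton 0))
    ext x
    simp [S]
  refine not_baireMeasurableSet_of_shift_one (fun k => ?_) ?_ (fun x hx => ?_)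
    hSm.baireMeasurableSet
  · rw [hS]
    congr 1
    push_cast
    ring
  · rw [hS, Set.disjoint_left]
    rintro x ⟨hx, h0⟩ ⟨_, h1⟩
    rw [h0] at h1
    exact absurd h1 (by decide)
  · rw [hS]
    rcases Fin.exists_fin_two.1 ⟨c ⟨x, hx⟩, rfl⟩ with h | h
    · exact Or.inl ⟨hx, h⟩
    · exact Or.inr ⟨hx, h.trans (by decide)⟩

end TwoColorings

section Separated

variable {α : Type*} {d : ℕ}

def awayFrom (d : ℕ) (B : Set (ℤ → α)) : Set (ℤ → α) :=
  {x | ∀ j : ℤ, j ≠ 0 → j.natAbs < d → shift j x ∉ B}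

def IsSeparated (d : ℕ) (M : Set (ℤ → α)) : Prop := M ⊆ awayFrom d M

theorem IsSeparated.mono {M N : Set (ℤ → α)} (hM : IsSeparated d M) (hNM : N ⊆ M) :
    IsSeparated d N :=
  fun _ hx j hj hjd hN => hM (hNM hx) j hj hjd (hNM hN)

theorem IsSeparated.le_natAbs_sub {M : Set (ℤ → α)} (hM : IsSeparated d M) {x : ℤ → α}
    {s t : ℤ} (hs : shift s x ∈ M) (ht : shift t x ∈ M) (hst : s ≠ t) : d ≤ (t - s).natAbs := by
  by_contra! hlt
  exact hM hs (t - s) (sub_ne_zero.2 hst.symm) hlt (by simpa using ht)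

theorem MeasurableSet.awayFrom [MeasurableSpace α] {B : Set (ℤ → α)} (hB : MeasurableSet B)
    (d : ℕ) : MeasurableSet (awayFrom d B) :=
  measurableSet_setOfPred.2 <| Measurable.forall fun j =>
    measurable_const.imp <| measurable_const.imp (hB.mem.comp (measurable_shift j)).not

def greedyMarkers (d : ℕ) (Q : ℕ → Set (ℤ → α)) : ℕ → Set (ℤ → α)
  | 0 => ∅
  | n + 1 => greedyMarkers d Q n ∪ (Q n ∩ awayFrom d (greedyMarkers d Q n))

variable {Q : ℕ → Set (ℤ → α)}

theorem monotone_greedyMarkers : Monotone (greedyMarkers d Q) :=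
  monotone_nat_of_le_succ fun _ => Set.subset_union_left

theorem measurableSet_greedyMarkers [MeasurableSpace α] (hQ : ∀ n, MeasurableSet (Q n))
    (n : ℕ) : MeasurableSet (greedyMarkers d Q n) := by
  induction n with
  | zero => exact .empty
  | succ n ih => exact ih.union ((hQ n).inter (ih.awayFrom d))

theorem isSeparated_greedyMarkers (hQ : ∀ n, IsSeparated d (Q n)) (n : ℕ) :
    IsSeparated d (greedyMarkers d Q n) := by
  induction n with
  | zero => exact fun _ hx => hx.elim
  | succ n ih =>
    rintro x (hx | ⟨hxQ, hxB⟩) j hj hjd (hy | ⟨hyQ, hyB⟩)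
    · exact ih hx j hj hjd hy
    · exact hyB (-j) (neg_ne_zero.2 hj) (by omega) (by simpa using hx)
    · exact hxB j hj hjd hy
    · exact hQ n hxQ j hj hjd hyQ

theorem exists_measurableSet_isSeparated_near [MeasurableSpace α] (hd : 0 < d)
    (hQm : ∀ n, MeasurableSet (Q n)) (hQ : ∀ n, IsSeparated d (Q n)) :
    ∃ M : Set (ℤ → α), MeasurableSet M ∧ IsSeparated d M ∧
      ∀ n, ∀ x ∈ Q n, ∃ j : ℤ, j.natAbs < d ∧ shift j x ∈ M := by
  refine ⟨⋃ n, greedyMarkers d Q n, .iUnion (measurableSet_greedyMarkers hQm), ?_, ?_⟩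
  · intro x hx j hj hjd hy
    obtain ⟨n₁, hx⟩ := Set.mem_iUnion.1 hx
    obtain ⟨n₂, hy⟩ := Set.mem_iUnion.1 hy
    exact isSeparated_greedyMarkers hQ (max n₁ n₂)
      (monotone_greedyMarkers (le_max_left _ _) hx) j hj hjd
      (monotone_greedyMarkers (le_max_right _ _) hy)
  · intro n x hx
    by_cases hnew : x ∈ awayFrom d (greedyMarkers d Q n)
    · exact ⟨0, hd, Set.mem_iUnion.2 ⟨n + 1, Or.inr ⟨by simpa using hx, by simpa using hnew⟩⟩⟩
    · simp only [awayFrom, Set.mem_ofPred_eq, not_forall, not_not] at hnew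
      obtain ⟨j, -, hjd, hj⟩ := hnew
      exact ⟨j, hjd, Set.mem_iUnion.2 ⟨n, hj⟩⟩

end Separated

def cylinder (D F : Finset ℤ) : Set (ℤ → Bool) := {x | ∀ i ∈ D, x i = decide (i ∈ F)}

theorem measurableSet_cylinder (D F : Finset ℤ) : MeasurableSet (cylinder D F) := by
  unfold cylinder
  measurability

/-- Take a cylinder fixing, for each `0 < |j| < d`, both `x i` and `x (i + j)` at some `i`
where they differ. -/
theorem exists_isSeparated_cylinder {x : ℤ → Bool} (hx : x ∈ FreePart) (d : ℕ) :
    ∃ D F : Finset ℤ, x ∈ cylinder D F ∧ IsSeparated d (cylinder D F) := by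
  have hwit : ∀ j : ℤ, j ≠ 0 → ∃ i, x (i + j) ≠ x i := fun j hj => by
    by_contra! h
    exact hx j hj (funext h)
  choose! w hw using hwit
  set J := Finset.Ioo (-(d : ℤ)) d
  set D := J.image w ∪ J.image (fun j => w j + j)
  have hagree : ∀ y ∈ cylinder D (D.filter (x · = true)), ∀ i ∈ D, y i = x i := by
    intro y hy i hi
    simp [hy i hi, hi]
  refine ⟨D, D.filter (x · = true), fun i hi => (by simp [hi]), ?_⟩
  intro y hy j hj hjd hyj
  have hjJ : j ∈ J := by
    simp only [J, Finset.mem_Ioo]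
    omega
  refine hw j hj ?_
  rw [← hagree y hy _ (Finset.mem_union_right _ (Finset.mem_image_of_mem _ hjJ)),
    ← hagree _ hyj _ (Finset.mem_union_left _ (Finset.mem_image_of_mem _ hjJ)), shift_apply]

theorem exists_measurableSet_isSeparated_near_freePart {d : ℕ} (hd : 0 < d) :
    ∃ M : Set (ℤ → Bool), MeasurableSet M ∧ IsSeparated d M ∧
      ∀ x ∈ FreePart, ∃ j : ℤ, j.natAbs < d ∧ shift j x ∈ M := by
  obtain ⟨e, he⟩ := exists_surjective_nat (Finset ℤ × Finset ℤ)
  set Q : ℕ → Set (ℤ → Bool) := fun n =>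
    {x | x ∈ cylinder (e n).1 (e n).2 ∧ IsSeparated d (cylinder (e n).1 (e n).2)}
  obtain ⟨M, hM, hsep, hmax⟩ := exists_measurableSet_isSeparated_near (Q := Q) hd
    (fun n => (measurableSet_cylinder _ _).inter (.const _))
    (fun n x hx => (hx.2.mono fun _ hy => hy.1) hx)
  refine ⟨M, hM, hsep, fun x hx => ?_⟩
  obtain ⟨D, F, hxDF, hDF⟩ := exists_isSeparated_cylinder hx d
  obtain ⟨n, hn⟩ := he (D, F)
  exact hmax n x (by simp only [Q, hn, Set.mem_ofPred_eq]; exact ⟨hxDF, hDF⟩)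

theorem measurable_nat_sInf {X : Type*} [MeasurableSpace X] {s : ℕ → Set X}
    (hs : ∀ k, MeasurableSet (s k)) : Measurable fun x => sInf {k : ℕ | x ∈ s k} := by
  classical
  -- `Nat.find` needs a witness everywhere; where there is none, both sides are `0`.
  have hex : ∀ x, ∃ k, x ∈ s k ∨ ∀ j, x ∉ s j := fun x => by
    by_cases h : ∃ k, x ∈ s k
    exacts [h.imp fun _ => Or.inl, ⟨0, Or.inr (not_exists.1 h)⟩]
  convert measurable_find hex fun k => measurableSet_setOfPred.2
    ((hs k).mem.or (Measurable.forall fun j => (hs j).mem.not)) with x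
  by_cases h : ∃ k, x ∈ s k
  · rw [Nat.sInf_def (s := {k : ℕ | x ∈ s k}) h]
    exact Nat.find_congr' fun {k} => ⟨Or.inl, fun h' => h'.resolve_right (not_forall_not.2 h)⟩
  · rw [Set.eq_empty_of_forall_notMem (s := {k : ℕ | x ∈ s k}) (not_exists.1 h),
      Nat.sInf_empty, eq_comm, Nat.find_eq_zero]
    exact Or.inr (not_exists.1 h)

section MarkerDistance

variable {α : Type*} (M : Set (ℤ → α))

noncomputable def markerDist (x : ℤ → α) : ℕ := sInf {k : ℕ | shift (-(k : ℤ)) x ∈ M}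

/-- The length of the gap that ends at the last marker at or before `x`. -/
noncomputable def prevGap (x : ℤ → α) : ℕ :=
  markerDist M (shift (-(markerDist M x : ℤ) - 1) x) + 1

variable {M} {x : ℤ → α}

theorem shift_neg_markerDist_mem (hx : ∃ k : ℕ, shift (-(k : ℤ)) x ∈ M) :
    shift (-(markerDist M x : ℤ)) x ∈ M :=
  Nat.sInf_mem hx

theorem markerDist_le {k : ℕ} (h : shift (-(k : ℤ)) x ∈ M) : markerDist M x ≤ k :=
  Nat.sInf_le h

theorem shift_neg_notMem_of_lt_markerDist {k : ℕ} (h : k < markerDist M x) :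
    shift (-(k : ℤ)) x ∉ M :=
  Nat.notMem_of_lt_sInf h

theorem markerDist_shift_of_notMem (hx : ∃ k : ℕ, shift (-(k : ℤ)) x ∈ M) {a : ℕ}
    (h : ∀ t : ℕ, 1 ≤ t → t ≤ a → shift (t : ℤ) x ∉ M) :
    markerDist M (shift a x) = a + markerDist M x := by
  have hmem : shift (-((a + markerDist M x : ℕ) : ℤ)) (shift a x) ∈ M := by
    rw [shift_shift]
    convert shift_neg_markerDist_mem hx using 2
    push_cast
    ring
  refine le_antisymm (markerDist_le hmem) (not_lt.1 fun hlt => ?_)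
  set r := markerDist M (shift a x)
  have hr : shift (a + -(r : ℤ)) x ∈ M := by
    simpa using shift_neg_markerDist_mem (x := shift a x) ⟨_, hmem⟩
  rcases lt_or_ge r a with hra | hra
  · exact h (a - r) (by omega) (by omega) (by convert hr using 2; omega)
  · exact shift_neg_notMem_of_lt_markerDist (M := M) (x := x) (k := r - a) (by omega)
      (by convert hr using 2; omega)

theorem markerDist_prevGap_shift_of_notMem (hx : ∃ k : ℕ, shift (-(k : ℤ)) x ∈ M) {a : ℕ}
    (h : ∀ t : ℕ, 1 ≤ t → t ≤ a → shift (t : ℤ) x ∉ M) :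
    markerDist M (shift a x) = a + markerDist M x ∧ prevGap M (shift a x) = prevGap M x := by
  have hdist := markerDist_shift_of_notMem hx h
  refine ⟨hdist, ?_⟩
  simp only [prevGap, hdist, shift_shift]
  congr 3
  push_cast
  ring

theorem markerDist_prevGap_shift_of_mem {d : ℕ} (hsep : IsSeparated d M)
    (hx : ∃ k : ℕ, shift (-(k : ℤ)) x ∈ M) {a t : ℕ} (ht : shift (t : ℤ) x ∈ M) (ht1 : 1 ≤ t)
    (hta : t ≤ a) (had : a < d) :
    markerDist M (shift a x) = a - t ∧ prevGap M (shift a x) = t + markerDist M x ∧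
      d ≤ t + markerDist M x := by
  have hfar := hsep.le_natAbs_sub (shift_neg_markerDist_mem hx) ht (by omega)
  have hnext : ∀ u : ℕ, 1 ≤ u → u ≤ a - t → shift (u : ℤ) (shift t x) ∉ M := by
    intro u hu1 hu hmem
    have := hsep.le_natAbs_sub ht (by simpa using hmem) (by omega)
    omega
  have hprev : ∀ u : ℕ, 1 ≤ u → u ≤ t - 1 → shift (u : ℤ) x ∉ M := by
    intro u hu1 hu hmem
    have := hsep.le_natAbs_sub hmem ht (by omega)
    omega
  have hdist : markerDist M (shift a x) = a - t := by
    have hzero : markerDist M (shift (t : ℤ) x) = 0 :=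
      Nat.eq_zero_of_le_zero (markerDist_le (k := 0) (by simpa using ht))
    have h := markerDist_shift_of_notMem ⟨0, by simpa using ht⟩ hnext
    rw [hzero, add_zero, shift_shift] at h
    rw [← h]
    congr 2
    omega
  refine ⟨hdist, ?_, by omega⟩
  have hstep : shift (-((a - t : ℕ) : ℤ) - 1) (shift a x) = shift ((t - 1 : ℕ) : ℤ) x := by
    rw [shift_shift]
    congr 1
    omega
  rw [prevGap, hdist, hstep, markerDist_shift_of_notMem hx hprev]
  omega

end MarkerDistance

section Coloring

def gapColor (m l g : ℕ) : ℕ :=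
  if l < 2 * m then (if (l + g) % 2 = 0 then 0 else 2)
  else if l < 4 * m then (if (l + g) % 2 = 0 then g % 2 else 2)
  else l % 2

theorem gapColor_lt_three (m l g : ℕ) : gapColor m l g < 3 := by
  unfold gapColor
  split_ifs <;> omega

theorem gapColor_ne_add {m a : ℕ} (ha : a % 2 = 1) (ham : a ≤ m) (l g : ℕ) :
    gapColor m l g ≠ gapColor m (l + a) g := by
  unfold gapColor
  split_ifs <;> omega

theorem gapColor_ne_of_crossing {m a t l : ℕ} (ha : a % 2 = 1) (ham : a ≤ m) (ht1 : 1 ≤ t)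
    (hta : t ≤ a) (hgap : 6 * m ≤ t + l) (g : ℕ) :
    gapColor m l g ≠ gapColor m (a - t) (t + l) := by
  unfold gapColor
  split_ifs <;> omega

variable {α : Type*}

noncomputable def markerColor (M : Set (ℤ → α)) (m : ℕ) (x : ℤ → α) : Fin 3 :=
  ⟨gapColor m (markerDist M x) (prevGap M x), gapColor_lt_three _ _ _⟩

variable {M : Set (ℤ → α)} {m : ℕ}

theorem measurable_markerColor [MeasurableSpace α] (hM : MeasurableSet M) :
    Measurable (markerColor M m) := by
  have hdist : Measurable (markerDist M) := measurable_nat_sInf fun k => measurable_shift _ hM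
  have hgap : Measurable (prevGap M) :=
    (measurable_from_prod_countable_left
      (f := fun p : (ℤ → α) × ℕ => markerDist M (shift (-(p.2 : ℤ) - 1) p.1) + 1)
      fun n => (hdist.comp (measurable_shift (-(n : ℤ) - 1))).add_const 1).comp
      (measurable_id.prodMk hdist)
  exact (measurable_of_countable fun p : ℕ × ℕ =>
    (⟨gapColor m p.1 p.2, gapColor_lt_three _ _ _⟩ : Fin 3)).comp (hdist.prodMk hgap)

theorem markerColor_ne_shift (hsep : IsSeparated (6 * m) M) {x : ℤ → α}
    (hx : ∃ k : ℕ, shift (-(k : ℤ)) x ∈ M) {a : ℕ} (ha : Odd a) (ham : a ≤ m) :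
    markerColor M m x ≠ markerColor M m (shift a x) := by
  have ha2 : a % 2 = 1 := Nat.odd_iff.1 ha
  simp only [markerColor, ne_eq, Fin.mk.injEq]
  by_cases hcross : ∃ t : ℕ, 1 ≤ t ∧ t ≤ a ∧ shift (t : ℤ) x ∈ M
  · obtain ⟨t, ht1, hta, ht⟩ := hcross
    obtain ⟨hdist, hgap, hfar⟩ :=
      markerDist_prevGap_shift_of_mem hsep hx ht ht1 hta (by omega)
    rw [hdist, hgap]
    exact gapColor_ne_of_crossing ha2 ham ht1 hta hfar _
  · push Not at hcross
    obtain ⟨hdist, hgap⟩ := markerDist_prevGap_shift_of_notMem hx hcross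
    rw [hdist, hgap, add_comm]
    exact gapColor_ne_add ha2 ham _ _

end Coloring

theorem exists_isBorelColoring_three {A : Finset ℕ} (hodd : ∀ a ∈ A, Odd a) :
    ∃ c : FreePart → Fin 3, IsBorelColoring A c := by
  set m := A.sup id + 1
  obtain ⟨M, hM, hsep, hmax⟩ :=
    exists_measurableSet_isSeparated_near_freePart (d := 6 * m) (by omega)
  have hleft : ∀ x ∈ FreePart, ∃ k : ℕ, shift (-(k : ℤ)) x ∈ M := by
    intro x hx
    obtain ⟨j, hj, hjM⟩ := hmax _ ((shift_mem_freePart_iff (-(6 * m : ℤ))).2 hx)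
    refine ⟨(6 * m - j).toNat, ?_⟩
    convert hjM using 1
    rw [shift_shift]
    congr 1
    omega
  refine ⟨fun x => markerColor M m x, (measurable_markerColor hM).comp measurable_subtype_coe,
    fun x a ha _ => markerColor_ne_shift hsep (hleft x x.2) (hodd a ha) ?_⟩
  exact (Finset.le_sup (f := id) ha).trans (Nat.le_succ _)

theorem IsBorelColoring.castLE {A : Finset ℕ} {k l : ℕ} {c : FreePart → Fin k}
    (hc : IsBorelColoring A c) (hkl : k ≤ l) : IsBorelColoring A (Fin.castLE hkl ∘ c) :=
  ⟨(measurable_of_countable _).comp hc.1,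
    fun x a ha h heq => hc.2 x a ha h (Fin.castLE_injective hkl heq)⟩

theorem borelChromatic_eq_three_of_all_odd_general
    (A : Finset ℕ) (hgcd : A.gcd id = 1)
    (hodd : ∀ a ∈ A, Odd a) :
    borelChromatic A = 3 := by
  have h3 : 3 ∈ {k : ℕ | ∃ c : FreePart → Fin k, IsBorelColoring A c} :=
    exists_isBorelColoring_three hodd
  refine le_antisymm (Nat.sInf_le h3) (le_csInf ⟨3, h3⟩ fun k ⟨c, hc⟩ => ?_)
  by_contra! hk
  exact not_isBorelColoring_two hgcd hodd _ (hc.castLE (by omega : k ≤ 2))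

/-- If all of `a₁, …, aₙ` are odd, then `χ(a₁,…,aₙ) = 3`. -/
theorem borelChromatic_eq_three_of_all_odd
    (A : Finset ℕ) (hA : A.Nonempty) (hpos : ∀ a ∈ A, 0 < a) (hgcd : A.gcd id = 1)
    (hodd : ∀ a ∈ A, Odd a) :
    borelChromatic A = 3 :=
  borelChromatic_eq_three_of_all_odd_general A hgcd hodd
end

section
/- Let S = {±a_1,…,±a_n} where 0 < a_1 < … < a_n and gcd(a_1,…,a_n) = 1. If a_n < 2·a_1, then χ(a_1,…,a_n) = 3. -/
open Filter Topology Set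

namespace ShiftGraph

section Shift

variable {α : Type*}

@[simp] lemma shift_apply (s : ℤ) (x : ℤ → α) (n : ℤ) : shift s x n = x (n + s) := rfl

lemma shift_shift (s t : ℤ) (x : ℤ → α) : shift s (shift t x) = shift (t + s) x := by
  funext n; simp [add_assoc, add_comm s t]

lemma shift_shift_of_add_eq {s t u : ℤ} (h : t + s = u) (x : ℤ → α) :
    shift s (shift t x) = shift u x := by
  rw [shift_shift, h]

@[simp] lemma shift_zero (x : ℤ → α) : shift 0 x = x := by
  funext n; simp

lemma continuous_shift [TopologicalSpace α] (s : ℤ) : Continuous (shift s : (ℤ → α) → ℤ → α) :=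
  continuous_pi fun n => continuous_apply (n + s)

lemma measurable_shift [MeasurableSpace α] (s : ℤ) : Measurable (shift s : (ℤ → α) → ℤ → α) :=
  measurable_pi_lambda _ fun n => measurable_pi_apply (n + s)

def shiftHomeomorph [TopologicalSpace α] (s : ℤ) : (ℤ → α) ≃ₜ (ℤ → α) where
  toFun := shift s
  invFun := shift (-s)
  left_inv x := by simp [shift_shift]
  right_inv x := by simp [shift_shift]
  continuous_toFun := continuous_shift s
  continuous_invFun := continuous_shift (-s)

lemma tendsto_shift_residual [TopologicalSpace α] (s : ℤ) :
    Tendsto (shift s : (ℤ → α) → ℤ → α) (residual _) (residual _) :=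
  tendsto_residual_of_isOpenMap (continuous_shift s) (shiftHomeomorph s).isOpenMap

end Shift

lemma shift_mem_freePart {x : ℤ → Bool} (hx : x ∈ FreePart) (t : ℤ) : shift t x ∈ FreePart := by
  intro s hs h
  apply hx s hs
  simpa [shift_shift, add_comm s] using congrArg (shift (-t)) h

lemma freePart_eq_iInter : FreePart = ⋂ s ≠ (0 : ℤ), {x : ℤ → Bool | shift s x = x}ᶜ := by
  ext x; simp [FreePart]

lemma isClosed_setOf_shift_eq (s : ℤ) : IsClosed {x : ℤ → Bool | shift s x = x} :=
  isClosed_eq (continuous_shift s) continuous_id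

lemma measurableSet_freePart : MeasurableSet FreePart := by
  rw [freePart_eq_iInter]
  exact .iInter fun s => .iInter fun _ => (isClosed_setOf_shift_eq s).measurableSet.compl

lemma exists_cylinder_subset {U : Set (ℤ → Bool)} (hU : IsOpen U) (hne : U.Nonempty) :
    ∃ (x₀ : ℤ → Bool) (w : ℕ), ∀ y : ℤ → Bool, (∀ i : ℤ, i.natAbs ≤ w → y i = x₀ i) → y ∈ U := by
  obtain ⟨x₀, hx₀⟩ := hne
  obtain ⟨I, u, hIu, hsub⟩ := isOpen_pi_iff.1 hU x₀ hx₀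
  refine ⟨x₀, I.sup Int.natAbs, fun y hy => hsub fun i hi => ?_⟩
  rw [hy i (Finset.le_sup (f := Int.natAbs) hi)]
  exact (hIu i hi).2

lemma dense_compl_setOf_shift_eq {s : ℤ} (hs : s ≠ 0) :
    Dense {x : ℤ → Bool | shift s x = x}ᶜ := by
  refine dense_iff_inter_open.2 fun U hU hne => ?_
  obtain ⟨x₀, w, hw⟩ := exists_cylinder_subset hU hne
  -- a single `true` far outside the window is moved by the shift
  set k : ℤ := w + s.natAbs + 1
  refine ⟨fun i => if i.natAbs ≤ w then x₀ i else decide (i = k), hw _ fun i hi => if_pos hi, ?_⟩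
  intro h
  have := congrFun h (k - s)
  simp only [shift_apply, sub_add_cancel, if_neg (show ¬ k.natAbs ≤ w by omega),
    if_neg (show ¬ (k - s).natAbs ≤ w by omega)] at this
  simp at this
  omega

lemma freePart_mem_residual : FreePart ∈ residual (ℤ → Bool) := by
  rw [freePart_eq_iInter, countable_iInter_mem]
  refine fun s => countable_iInter_mem.2 fun hs => ?_
  exact residual_of_dense_open (isClosed_setOf_shift_eq s).isOpen_compl
    (dense_compl_setOf_shift_eq hs)

lemma exists_forall_inter_preimage_shift_nonempty {U : Set (ℤ → Bool)} (hU : IsOpen U)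
    (hne : U.Nonempty) : ∃ w : ℕ, ∀ t : ℤ, w < t.natAbs → (U ∩ shift t ⁻¹' U).Nonempty := by
  obtain ⟨x₀, w, hw⟩ := exists_cylinder_subset hU hne
  refine ⟨2 * w, fun t ht => ⟨fun i => if i.natAbs ≤ w then x₀ i else x₀ (i - t),
    hw _ fun i hi => if_pos hi, hw _ fun i hi => ?_⟩⟩
  simp only [shift_apply, add_sub_cancel_right]
  exact if_neg (by omega)

open Finset in
def blockStart (b : ℕ → ℕ) (j : ℕ) : ℕ := ∑ i ∈ range j, b i

def blockIndex (b : ℕ → ℕ) (R p : ℕ) : ℕ := Nat.findGreatest (fun j => blockStart b j ≤ p) R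

section Blocks

variable {b : ℕ → ℕ} {R p j a : ℕ}

@[simp] lemma blockStart_zero : blockStart b 0 = 0 := rfl

lemma blockStart_succ (j : ℕ) : blockStart b (j + 1) = blockStart b j + b j :=
  Finset.sum_range_succ _ _

lemma blockStart_mono : Monotone (blockStart b) := fun _ _ h =>
  Finset.sum_le_sum_of_subset (Finset.range_subset_range.2 h)

lemma blockStart_blockIndex_le (R p : ℕ) : blockStart b (blockIndex b R p) ≤ p :=
  Nat.findGreatest_spec (P := fun j => blockStart b j ≤ p) (Nat.zero_le R) (by simp)

lemma le_blockIndex (hj : j ≤ R) (h : blockStart b j ≤ p) : j ≤ blockIndex b R p :=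
  Nat.le_findGreatest hj h

lemma blockIndex_lt (h : p < blockStart b j) : blockIndex b R p < j := by
  by_contra! hj
  exact (blockStart_mono hj |>.trans (blockStart_blockIndex_le R p)).not_gt h

lemma lt_blockStart_blockIndex_succ (hp : p < blockStart b R) :
    p < blockStart b (blockIndex b R p + 1) := by
  by_contra! h
  exact (le_blockIndex (blockIndex_lt hp) h).not_gt (Nat.lt_succ_self _)

lemma blockIndex_add_eq (hle : ∀ j, b j ≤ a) (hpair : ∀ j, a ≤ b j + b (j + 1))
    (hp : p + a < blockStart b R) :
    blockIndex b R (p + a) = blockIndex b R p + 1 ∨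
      blockIndex b R (p + a) = blockIndex b R p + 2 := by
  set J := blockIndex b R p
  have hJ : J < R := blockIndex_lt (by omega)
  have hstart := blockStart_blockIndex_le (b := b) R p
  have hnext : p < blockStart b (J + 1) := lt_blockStart_blockIndex_succ (by omega)
  have h1 := blockStart_succ (b := b) J
  have h2 := blockStart_succ (b := b) (J + 1)
  have h3 := blockStart_succ (b := b) (J + 2)
  have hlow : J + 1 ≤ blockIndex b R (p + a) := le_blockIndex hJ (by linarith [hle J])
  have hup : blockIndex b R (p + a) < J + 3 := blockIndex_lt (by linarith [hpair (J + 1)])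
  omega

end Blocks

def tripleCount (d L : ℕ) : ℕ := L / (3 * d) + 1

/-- The number of blocks of size `d - 1` needed for `3 * tripleCount d L` blocks of size `d` or
`d - 1` to tile `[0, L)` exactly. -/
def defectCount (d L : ℕ) : ℕ := 3 * d * tripleCount d L - L

/-- Short blocks only start triples, so no two of them are adjacent, even across the end of an
interval. -/
def blockSize (d L j : ℕ) : ℕ := if j % 3 = 0 ∧ j / 3 < defectCount d L then d - 1 else d

def blockColor (d L p : ℕ) : Fin 3 :=
  ⟨blockIndex (blockSize d L) (3 * tripleCount d L) p % 3, Nat.mod_lt _ (by norm_num)⟩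

section BlockColor

variable {d L L' p a : ℕ}

lemma blockSize_le (j : ℕ) : blockSize d L j ≤ d := by
  unfold blockSize; split <;> omega

lemma blockSize_of_mod_ne_zero {j : ℕ} (hj : j % 3 ≠ 0) : blockSize d L j = d :=
  if_neg fun h => hj h.1

lemma two_mul_sub_one_le_blockSize_add (j : ℕ) :
    2 * d - 1 ≤ blockSize d L j + blockSize d L (j + 1) := by
  unfold blockSize; split_ifs <;> omega

lemma blockSize_three_mul (q : ℕ) :
    blockSize d L (3 * q) = if q < defectCount d L then d - 1 else d := by
  simp [blockSize]

lemma blockStart_three_mul (hd : 0 < d) (q : ℕ) :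
    blockStart (blockSize d L) (3 * q) + min q (defectCount d L) = 3 * d * q := by
  induction q with
  | zero => simp
  | succ q ih =>
    have h0 := blockSize_three_mul (d := d) (L := L) q
    have h1 := blockSize_of_mod_ne_zero (d := d) (L := L) (j := 3 * q + 1) (by omega)
    have h2 := blockSize_of_mod_ne_zero (d := d) (L := L) (j := 3 * q + 2) (by omega)
    rw [show 3 * (q + 1) = 3 * q + 2 + 1 by ring, blockStart_succ, blockStart_succ (3 * q + 1),
      blockStart_succ, h0, h1, h2]
    split_ifs <;> grind

lemma defectCount_add (hd : 0 < d) : defectCount d L + L = 3 * d * tripleCount d L := by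
  have := Nat.div_add_mod L (3 * d)
  have := Nat.mod_lt L (show 3 * d > 0 by omega)
  unfold defectCount tripleCount
  rw [Nat.mul_add]
  omega

lemma defectCount_le_tripleCount (hd : 0 < d) (hL : 9 * d * d ≤ L) :
    defectCount d L ≤ tripleCount d L := by
  have hq : 3 * d ≤ L / (3 * d) := (Nat.le_div_iff_mul_le (by omega)).2 (by nlinarith)
  have := Nat.div_add_mod L (3 * d)
  have := Nat.mod_lt L (show 3 * d > 0 by omega)
  unfold defectCount tripleCount
  rw [Nat.mul_add]
  omega

lemma blockStart_blockSize_total (hd : 0 < d) (hL : 9 * d * d ≤ L) :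
    blockStart (blockSize d L) (3 * tripleCount d L) = L := by
  have := blockStart_three_mul (L := L) hd (tripleCount d L)
  have := defectCount_add (L := L) hd
  have := defectCount_le_tripleCount hd hL
  omega

lemma blockColor_add_ne (hda : d ≤ a) (had : a < 2 * d) (hL : 9 * d * d ≤ L) (hpa : p + a < L) :
    blockColor d L (p + a) ≠ blockColor d L p := by
  have hstep := blockIndex_add_eq (R := 3 * tripleCount d L) (p := p)
    (b := blockSize d L) (fun j => (blockSize_le j).trans hda)
    (fun j => by have := two_mul_sub_one_le_blockSize_add (d := d) (L := L) j; omega)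
    (by rwa [blockStart_blockSize_total (by omega) hL])
  simp only [blockColor, ne_eq, Fin.mk.injEq]
  omega

/-- The last two blocks of `[0, L)` (colours `1, 2`) and the block `1` of `[0, L')` have full
size `d`, so a step out of block `3m - 2` lands in block `0` and one out of block `3m - 1` lands
in block `0` or `1`. -/
lemma blockColor_add_sub_ne (hda : d ≤ a) (had : a < 2 * d) (hL : 9 * d * d ≤ L)
    (hp : p < L) (hpa : L ≤ p + a) :
    blockColor d L' (p + a - L) ≠ blockColor d L p := by
  have hd : 0 < d := by omega
  simp only [blockColor, ne_eq, Fin.mk.injEq]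
  have htotal := blockStart_blockSize_total hd hL
  have hm : 1 ≤ tripleCount d L := Nat.le_add_left 1 _
  generalize tripleCount d L = m at htotal hm ⊢
  generalize 3 * tripleCount d L' = R'
  have e1 := blockStart_succ (b := blockSize d L) (3 * m - 2)
  have e2 := blockStart_succ (b := blockSize d L) (3 * m - 1)
  have f2 := blockStart_succ (b := blockSize d L') 1
  have hb0 : d - 1 ≤ blockStart (blockSize d L') 1 := by
    rw [blockStart_succ, blockStart_zero, zero_add, blockSize]; split <;> omega
  rw [show 3 * m - 2 + 1 = 3 * m - 1 by omega, blockSize_of_mod_ne_zero (by omega)] at e1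
  rw [show 3 * m - 1 + 1 = 3 * m by omega, blockSize_of_mod_ne_zero (by omega)] at e2
  rw [blockSize_of_mod_ne_zero (by omega)] at f2
  have hpa' : p + a - L < blockStart (blockSize d L') 2 := by
    rw [f2]; omega
  have hlow : 3 * m - 2 ≤ blockIndex (blockSize d L) (3 * m) p :=
    le_blockIndex (by omega) (by omega)
  have hup : blockIndex (blockSize d L) (3 * m) p < 3 * m := blockIndex_lt (by omega)
  have hup' : blockIndex (blockSize d L') R' (p + a - L) < 2 := blockIndex_lt hpa'
  rcases (by omega : blockIndex (blockSize d L) (3 * m) p = 3 * m - 2 ∨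
    blockIndex (blockSize d L) (3 * m) p = 3 * m - 1) with hJ | hJ
  · have hpR : p < blockStart (blockSize d L) (3 * m - 1) := by
      have := lt_blockStart_blockIndex_succ (b := blockSize d L) (R := 3 * m) (p := p) (by omega)
      rwa [hJ, show 3 * m - 2 + 1 = 3 * m - 1 by omega] at this
    have : blockIndex (blockSize d L') R' (p + a - L) < 1 := blockIndex_lt (j := 1) (by omega)
    omega
  · omega

end BlockColor

def IsSeparated (N : ℕ) (S : Set (ℤ → Bool)) : Prop :=
  ∀ x ∈ S, ∀ t : ℤ, t ≠ 0 → t.natAbs ≤ N → shift t x ∉ S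

def shiftNbhd (N : ℕ) (S : Set (ℤ → Bool)) : Set (ℤ → Bool) :=
  {x | ∃ t : ℤ, t.natAbs ≤ N ∧ shift t x ∈ S}

lemma isSeparated_of_pos {N : ℕ} {S : Set (ℤ → Bool)}
    (h : ∀ x ∈ S, ∀ t : ℤ, 0 < t → t ≤ N → shift t x ∉ S) : IsSeparated N S := by
  intro x hx t ht htN hxt
  rcases ht.lt_or_gt with ht | ht
  · exact h _ hxt (-t) (by omega) (by omega) (by simpa [shift_shift] using hx)
  · exact h x hx t ht (by omega) hxt

lemma measurableSet_shiftNbhd (N : ℕ) {S : Set (ℤ → Bool)} (hS : MeasurableSet S) :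
    MeasurableSet (shiftNbhd N S) := by
  have : shiftNbhd N S = ⋃ t : ℤ, ⋃ (_ : t.natAbs ≤ N), shift t ⁻¹' S := by
    ext x; simp [shiftNbhd]
  rw [this]
  exact .iUnion fun t => .iUnion fun _ => measurable_shift t hS

section Greedy

variable (N : ℕ) (U : ℕ → Set (ℤ → Bool))

/-- The points within distance `N` of a marker chosen before stage `n` of the greedy
construction of a separated set from the cover `U`. -/
def greedyBlocked : ℕ → Set (ℤ → Bool)
  | 0 => ∅
  | n + 1 => greedyBlocked n ∪ shiftNbhd N (U n \ greedyBlocked n)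

def greedyMarkers : Set (ℤ → Bool) := ⋃ n, U n \ greedyBlocked N U n

variable {N U}

lemma greedyBlocked_mono : Monotone (greedyBlocked N U) :=
  monotone_nat_of_le_succ fun _ => subset_union_left

lemma measurableSet_greedyMarkers (hU : ∀ n, MeasurableSet (U n)) :
    MeasurableSet (greedyMarkers N U) := by
  have hB : ∀ n, MeasurableSet (greedyBlocked N U n) := fun n => by
    induction n with
    | zero => exact .empty
    | succ n ih => exact ih.union (measurableSet_shiftNbhd N ((hU n).diff ih))
  exact .iUnion fun n => (hU n).diff (hB n)

lemma isSeparated_greedyMarkers (hU : ∀ n, IsSeparated N (U n)) :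
    IsSeparated N (greedyMarkers N U) := by
  -- two markers chosen at stages `n < m` cannot be close: the later one would be blocked
  have key : ∀ {n m x t}, n < m → x ∈ U n \ greedyBlocked N U n → t.natAbs ≤ N →
      shift t x ∉ U m \ greedyBlocked N U m := fun {n m x t} hnm hx ht hy =>
    hy.2 <| greedyBlocked_mono (Nat.succ_le_of_lt hnm) <|
      Or.inr ⟨-t, by omega, by simpa [shift_shift] using hx⟩
  rintro x ⟨_, ⟨n, rfl⟩, hx⟩ t ht htN ⟨_, ⟨m, rfl⟩, hy⟩
  rcases lt_trichotomy n m with hnm | rfl | hnm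
  · exact key hnm hx htN hy
  · exact hU n x hx.1 t ht htN hy.1
  · exact key (t := -t) hnm hy (by omega) (by simpa [shift_shift] using hx)

lemma shiftNbhd_mono {S T : Set (ℤ → Bool)} (h : S ⊆ T) : shiftNbhd N S ⊆ shiftNbhd N T :=
  fun _ ⟨t, ht, hx⟩ => ⟨t, ht, h hx⟩

lemma greedyBlocked_subset (n : ℕ) : greedyBlocked N U n ⊆ shiftNbhd N (greedyMarkers N U) := by
  induction n with
  | zero => exact empty_subset _
  | succ n ih => exact union_subset ih (shiftNbhd_mono (subset_iUnion_of_subset n subset_rfl))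

lemma subset_shiftNbhd_greedyMarkers : (⋃ n, U n) ⊆ shiftNbhd N (greedyMarkers N U) := by
  rintro x ⟨_, ⟨n, rfl⟩, hx⟩
  by_cases hB : x ∈ greedyBlocked N U n
  · exact greedyBlocked_subset n hB
  · exact ⟨0, Nat.zero_le N, mem_iUnion.2 ⟨n, by simpa using And.intro hx hB⟩⟩

end Greedy

def cylinder (I : Finset ℤ) (x : ℤ → Bool) : Set (ℤ → Bool) := {y | ∀ i ∈ I, y i = x i}

lemma measurableSet_cylinder (I : Finset ℤ) (x : ℤ → Bool) : MeasurableSet (cylinder I x) := by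
  have : cylinder I x = ⋂ i ∈ I, (fun y : ℤ → Bool => y i) ⁻¹' {x i} := by
    ext y; simp [cylinder]
  rw [this]
  exact .biInter I.countable_toSet fun i _ => measurable_pi_apply i (measurableSet_singleton _)

lemma cylinder_congr {I : Finset ℤ} {x x' : ℤ → Bool} (h : ∀ i ∈ I, x i = x' i) :
    cylinder I x = cylinder I x' := by
  ext y; exact forall₂_congr fun i hi => by rw [h i hi]

/-- A free point is distinguished from each of its translates by `0 < t ≤ N` by the values at
two sites `j t` and `j t + t`; the cylinder fixing all these values is `N`-separated. -/
lemma exists_isSeparated_cylinder {x : ℤ → Bool} (hx : x ∈ FreePart) (N : ℕ) :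
    ∃ I : Finset ℤ, IsSeparated N (cylinder I x) := by
  have hne : ∀ t : ℤ, ∃ j : ℤ, t ≠ 0 → x (j + t) ≠ x j := fun t => by
    by_cases ht : t = 0
    · exact ⟨0, fun h => (h ht).elim⟩
    · obtain ⟨j, hj⟩ := Function.ne_iff.1 (hx t ht)
      exact ⟨j, fun _ => hj⟩
  choose j hj using hne
  refine ⟨(Finset.Icc 1 (N : ℤ)).biUnion fun t => {j t, j t + t},
    isSeparated_of_pos fun y hy t ht htN hyt => hj t ht.ne' ?_⟩
  have mem : ∀ i ∈ ({j t, j t + t} : Finset ℤ), i ∈ (Finset.Icc 1 (N : ℤ)).biUnion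
      fun t => {j t, j t + t} := fun i hi => Finset.mem_biUnion.2 ⟨t, by simp; omega, hi⟩
  rw [← hy _ (mem _ (by simp)), ← hyt _ (mem _ (by simp)), shift_apply]

theorem exists_markers (N : ℕ) : ∃ M : Set (ℤ → Bool),
    MeasurableSet M ∧ IsSeparated N M ∧ FreePart ⊆ shiftNbhd N M := by
  classical
  obtain ⟨e, he⟩ := exists_surjective_nat (Finset ℤ × Finset ℤ)
  let C : Finset ℤ × Finset ℤ → Set (ℤ → Bool) := fun IT => cylinder IT.1 (· ∈ IT.2)
  let U : ℕ → Set (ℤ → Bool) := fun n => if IsSeparated N (C (e n)) then C (e n) else ∅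
  refine ⟨greedyMarkers N U, measurableSet_greedyMarkers fun n => ?_,
    isSeparated_greedyMarkers fun n => ?_, fun x hx => subset_shiftNbhd_greedyMarkers ?_⟩
  · dsimp only [U]; split_ifs
    exacts [measurableSet_cylinder _ _, .empty]
  · dsimp only [U]; split_ifs with h
    exacts [h, fun _ h => h.elim]
  · obtain ⟨I, hI⟩ := exists_isSeparated_cylinder hx N
    have hC : C (I, I.filter (x · = true)) = cylinder I x :=
      cylinder_congr fun i hi => by simp [hi]
    obtain ⟨n, hn⟩ := he (I, I.filter (x · = true))
    refine mem_iUnion.2 ⟨n, ?_⟩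
    simp only [U, hn, hC, if_pos hI]
    exact fun i _ => rfl

lemma measurable_natFind {X : Type*} [MeasurableSpace X] {p : X → ℕ → Prop}
    [∀ x, DecidablePred (p x)] [∀ x, Decidable (∃ n, p x n)] (hp : ∀ n, MeasurableSet {x | p x n}) :
    Measurable fun x => if h : ∃ n, p x n then Nat.find h else 0 := by
  have hs : MeasurableSet {x | ∃ n, p x n} := by
    simpa only [ofPred_exists] using MeasurableSet.iUnion hp
  exact Measurable.dite (s := {x | ∃ n, p x n}) (f := fun x => Nat.find x.2)
    (g := fun _ => 0)
    (measurable_find _ fun n => measurable_subtype_coe (hp n)) measurable_const hs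

open Classical in
noncomputable def prevMarkerDist (M : Set (ℤ → Bool)) (x : ℤ → Bool) : ℕ :=
  if h : ∃ n : ℕ, shift (-n) x ∈ M then Nat.find h else 0

open Classical in
noncomputable def nextMarkerDist (M : Set (ℤ → Bool)) (x : ℤ → Bool) : ℕ :=
  if h : ∃ n : ℕ, 0 < n ∧ shift n x ∈ M then Nat.find h else 0

/-- `x` sits at position `prevMarkerDist M x` of the interval of length
`prevMarkerDist M x + nextMarkerDist M x` between consecutive markers. -/
noncomputable def markerColor (M : Set (ℤ → Bool)) (d : ℕ) (x : ℤ → Bool) : Fin 3 :=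
  blockColor d (prevMarkerDist M x + nextMarkerDist M x) (prevMarkerDist M x)

section MarkerDist

variable {N : ℕ} {M : Set (ℤ → Bool)} {x : ℤ → Bool}

lemma measurable_markerColor (hM : MeasurableSet M) (d : ℕ) : Measurable (markerColor M d) := by
  classical
  have hprev : Measurable (prevMarkerDist M) :=
    measurable_natFind (p := fun x (n : ℕ) => shift (-n) x ∈ M) fun n => measurable_shift _ hM
  have hnext : Measurable (nextMarkerDist M) :=
    measurable_natFind (p := fun x (n : ℕ) => 0 < n ∧ shift n x ∈ M) fun n =>
      (MeasurableSet.const (0 < n)).inter (measurable_shift _ hM)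
  have : markerColor M d = (fun pq : ℕ × ℕ => blockColor d (pq.1 + pq.2) pq.1) ∘
      fun x => (prevMarkerDist M x, nextMarkerDist M x) := rfl
  rw [this]
  exact (measurable_of_countable _).comp (hprev.prodMk hnext)

lemma prevMarkerDist_spec (h : ∃ n : ℕ, shift (-n) x ∈ M) :
    shift (-(prevMarkerDist M x)) x ∈ M ∧ ∀ m < prevMarkerDist M x, shift (-m) x ∉ M := by
  classical
  rw [prevMarkerDist, dif_pos h]
  exact ⟨Nat.find_spec h, fun m hm => Nat.find_min h hm⟩

lemma prevMarkerDist_eq {n : ℕ} (hn : shift (-n) x ∈ M) (hmin : ∀ m < n, shift (-m) x ∉ M) :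
    prevMarkerDist M x = n := by
  classical
  rw [prevMarkerDist, dif_pos ⟨n, hn⟩, Nat.find_eq_iff]
  exact ⟨hn, hmin⟩

lemma nextMarkerDist_spec (h : ∃ n : ℕ, 0 < n ∧ shift n x ∈ M) :
    0 < nextMarkerDist M x ∧ shift (nextMarkerDist M x) x ∈ M ∧
      ∀ m, 0 < m → m < nextMarkerDist M x → shift m x ∉ M := by
  classical
  rw [nextMarkerDist, dif_pos h]
  exact ⟨(Nat.find_spec h).1, (Nat.find_spec h).2,
    fun m hm hlt hmem => Nat.find_min h hlt ⟨hm, hmem⟩⟩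

lemma nextMarkerDist_eq {n : ℕ} (hn : 0 < n) (hnM : shift n x ∈ M)
    (hmin : ∀ m, 0 < m → m < n → shift m x ∉ M) : nextMarkerDist M x = n := by
  classical
  rw [nextMarkerDist, dif_pos ⟨n, hn, hnM⟩, Nat.find_eq_iff]
  exact ⟨⟨hn, hnM⟩, fun m hm ⟨hm0, hmM⟩ => hmin m hm0 hm hmM⟩

variable (hsep : IsSeparated N M) (hcov : FreePart ⊆ shiftNbhd N M)
include hcov

lemma exists_shift_neg_mem (hx : x ∈ FreePart) : ∃ n : ℕ, shift (-n) x ∈ M := by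
  obtain ⟨t, ht, hmem⟩ := hcov (shift_mem_freePart hx (-N))
  exact ⟨(N - t).toNat,
    by rwa [shift_shift_of_add_eq (u := -((N - t).toNat : ℤ)) (by omega)] at hmem⟩

lemma exists_shift_pos_mem (hx : x ∈ FreePart) : ∃ n : ℕ, 0 < n ∧ shift n x ∈ M := by
  obtain ⟨t, ht, hmem⟩ := hcov (shift_mem_freePart hx (N + 1))
  exact ⟨(N + 1 + t).toNat, by omega,
    by rwa [shift_shift_of_add_eq (u := ((N + 1 + t).toNat : ℤ)) (by omega)] at hmem⟩

lemma shift_notMem_of_lt_of_lt (hx : x ∈ FreePart) (t : ℤ)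
    (h1 : -(prevMarkerDist M x : ℤ) < t) (h2 : t < nextMarkerDist M x) : shift t x ∉ M := by
  rcases le_or_gt t 0 with ht | ht
  · have := (prevMarkerDist_spec (exists_shift_neg_mem hcov hx)).2 t.natAbs (by omega)
    rwa [show -(t.natAbs : ℤ) = t by omega] at this
  · have := (nextMarkerDist_spec (exists_shift_pos_mem hcov hx)).2.2 t.natAbs (by omega) (by omega)
    rwa [show (t.natAbs : ℤ) = t by omega] at this

include hsep in
lemma lt_prevMarkerDist_add_nextMarkerDist (hx : x ∈ FreePart) :
    N < prevMarkerDist M x + nextMarkerDist M x := by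
  have hprev := (prevMarkerDist_spec (exists_shift_neg_mem hcov hx)).1
  obtain ⟨hpos, hnext, -⟩ := nextMarkerDist_spec (exists_shift_pos_mem hcov hx)
  by_contra! h
  refine hsep _ hprev (nextMarkerDist M x + prevMarkerDist M x) (by omega) (by omega) ?_
  rwa [shift_shift_of_add_eq (u := nextMarkerDist M x) (by ring)]

lemma prevMarkerDist_shift_of_lt (hx : x ∈ FreePart) {a : ℕ} (ha : a < nextMarkerDist M x) :
    prevMarkerDist M (shift a x) = prevMarkerDist M x + a := by
  have hprev := (prevMarkerDist_spec (exists_shift_neg_mem hcov hx)).1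
  refine prevMarkerDist_eq (by rwa [shift_shift_of_add_eq (u := -prevMarkerDist M x) (by omega)])
    fun m hm => ?_
  rw [shift_shift_of_add_eq rfl]
  exact shift_notMem_of_lt_of_lt hcov hx _ (by omega) (by omega)

lemma nextMarkerDist_shift_of_lt (hx : x ∈ FreePart) {a : ℕ} (ha : a < nextMarkerDist M x) :
    nextMarkerDist M (shift a x) = nextMarkerDist M x - a := by
  obtain ⟨-, hnext, -⟩ := nextMarkerDist_spec (exists_shift_pos_mem hcov hx)
  refine nextMarkerDist_eq (by omega)
    (by rwa [shift_shift_of_add_eq (u := nextMarkerDist M x) (by omega)]) fun m hm hm' => ?_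
  rw [shift_shift_of_add_eq rfl]
  exact shift_notMem_of_lt_of_lt hcov hx _ (by omega) (by omega)

include hsep in
lemma prevMarkerDist_shift_of_le (hx : x ∈ FreePart) {a : ℕ} (ha : nextMarkerDist M x ≤ a)
    (haN : a ≤ N) : prevMarkerDist M (shift a x) = a - nextMarkerDist M x := by
  obtain ⟨hpos, hnext, -⟩ := nextMarkerDist_spec (exists_shift_pos_mem hcov hx)
  refine prevMarkerDist_eq (by rwa [shift_shift_of_add_eq (u := nextMarkerDist M x) (by omega)])
    fun m hm hmem => ?_
  refine hsep _ hnext (a - m - nextMarkerDist M x) (by omega) (by omega) ?_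
  rw [shift_shift_of_add_eq rfl] at hmem
  rwa [shift_shift_of_add_eq (u := a - m) (by omega)]

end MarkerDist

theorem markerColor_shift_ne {N d a : ℕ} {M : Set (ℤ → Bool)} {x : ℤ → Bool}
    (hsep : IsSeparated N M) (hcov : FreePart ⊆ shiftNbhd N M) (hN : 9 * d * d ≤ N)
    (hda : d ≤ a) (had : a < 2 * d) (hx : x ∈ FreePart) :
    markerColor M d (shift a x) ≠ markerColor M d x := by
  have hL := lt_prevMarkerDist_add_nextMarkerDist hsep hcov hx
  have hpos := (nextMarkerDist_spec (exists_shift_pos_mem hcov hx)).1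
  unfold markerColor
  rcases lt_or_ge a (nextMarkerDist M x) with ha | ha
  · rw [prevMarkerDist_shift_of_lt hcov hx ha, nextMarkerDist_shift_of_lt hcov hx ha,
      show prevMarkerDist M x + a + (nextMarkerDist M x - a) =
        prevMarkerDist M x + nextMarkerDist M x by omega]
    exact blockColor_add_ne hda had (by omega) (by omega)
  · rw [prevMarkerDist_shift_of_le hsep hcov hx ha (by nlinarith),
      show a - nextMarkerDist M x = prevMarkerDist M x + a -
        (prevMarkerDist M x + nextMarkerDist M x) by omega]
    exact blockColor_add_sub_ne hda had (by omega) (by omega) (by omega)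

theorem exists_isBorelColoring_three {A : Finset ℕ} {d : ℕ} (hA : ∀ a ∈ A, d ≤ a ∧ a < 2 * d) :
    ∃ c : {x : ℤ → Bool // x ∈ FreePart} → Fin 3, IsBorelColoring A c := by
  obtain ⟨M, hM, hsep, hcov⟩ := exists_markers (9 * d * d)
  refine ⟨fun x => markerColor M d x.1, (measurable_markerColor hM d).comp measurable_subtype_coe,
    fun x a ha _ => ?_⟩
  exact (markerColor_shift_ne hsep hcov le_rfl (hA a ha).1 (hA a ha).2 x.2).symm

def colorClass {k : ℕ} (c : {x : ℤ → Bool // x ∈ FreePart} → Fin k) (i : Fin k) :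
    Set (ℤ → Bool) :=
  Subtype.val '' (c ⁻¹' {i})

section ColorClass

variable {k : ℕ} {c : {x : ℤ → Bool // x ∈ FreePart} → Fin k}

lemma mem_colorClass_iff {i : Fin k} {z : ℤ → Bool} :
    z ∈ colorClass c i ↔ ∃ h : z ∈ FreePart, c ⟨z, h⟩ = i := by
  simp [colorClass]

lemma measurableSet_colorClass (hc : Measurable c) (i : Fin k) : MeasurableSet (colorClass c i) :=
  measurableSet_freePart.subtype_image (hc (measurableSet_singleton i))

lemma exists_colorClass_residualEq_open (hc : Measurable c) :
    ∃ (i : Fin k) (U : Set (ℤ → Bool)), IsOpen U ∧ U.Nonempty ∧ colorClass c i =ᵇ U := by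
  choose U hU hcU using fun i => (measurableSet_colorClass hc i).residualEq_isOpen
  have hgen : ∀ᶠ z in residual (ℤ → Bool), z ∈ FreePart ∧ ∀ i, (z ∈ colorClass c i ↔ z ∈ U i) :=
    (eventually_mem_set.2 freePart_mem_residual).and
      (eventually_all.2 fun i => (hcU i).mem_iff)
  obtain ⟨z, hzF, hz⟩ := (dense_of_mem_residual hgen).nonempty
  exact ⟨c ⟨z, hzF⟩, U _, hU _, ⟨z, (hz _).1 (mem_colorClass_iff.2 ⟨hzF, rfl⟩)⟩, hcU _⟩

end ColorClass

lemma coloring_shift_mul {a : ℕ} {c : {x : ℤ → Bool // x ∈ FreePart} → Fin 2}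
    (hc : ∀ x (h : shift a x.1 ∈ FreePart), c x ≠ c ⟨shift a x.1, h⟩)
    (x : {x : ℤ → Bool // x ∈ FreePart}) (m : ℕ) :
    (c ⟨shift (m * a) x.1, shift_mem_freePart x.2 _⟩ : ℕ) = (c x + m) % 2 := by
  induction m with
  | zero => simp [Nat.mod_eq_of_lt (c x).2]
  | succ m ih =>
    have hstep := hc ⟨_, shift_mem_freePart x.2 (m * a)⟩
      (shift_mem_freePart (shift_mem_freePart x.2 _) a)
    have e : shift (a : ℤ) (shift (m * a) x.1) = shift ((m + 1 : ℕ) * a) x.1 := by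
      rw [shift_shift]; push_cast; ring_nf
    simp only [e, ne_eq, Fin.ext_iff] at hstep
    have := (c ⟨shift ((m + 1 : ℕ) * a) x.1, shift_mem_freePart x.2 _⟩).2
    omega

theorem exists_color_shift_eq {a : ℕ} (ha : 0 < a) {c : {x : ℤ → Bool // x ∈ FreePart} → Fin 2}
    (hc : Measurable c) : ∃ x h, c x = c ⟨shift a x.1, h⟩ := by
  by_contra! hproper
  obtain ⟨i, U, hU, hUne, hcU⟩ := exists_colorClass_residualEq_open hc
  obtain ⟨w, hw⟩ := exists_forall_inter_preimage_shift_nonempty hU hUne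
  -- an odd multiple `t` of `a`, so long that `U` and `t • U` meet
  set t : ℤ := (2 * w + 1 : ℕ) * a
  have ht : w < t.natAbs := by
    rw [show t = ((2 * w + 1) * a : ℕ) by push_cast [t]; ring, Int.natAbs_natCast]
    nlinarith
  have hgen : ∀ᶠ z in residual (ℤ → Bool), (z ∈ colorClass c i ↔ z ∈ U) ∧
      (shift t z ∈ colorClass c i ↔ shift t z ∈ U) :=
    hcU.mem_iff.and (tendsto_shift_residual t |>.eventually hcU.mem_iff)
  obtain ⟨z, ⟨hzU, htzU⟩, hz, htz⟩ := (dense_of_mem_residual hgen).inter_open_nonempty _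
    (hU.inter (hU.preimage (continuous_shift t))) (hw t ht)
  obtain ⟨hzF, hci⟩ := mem_colorClass_iff.1 (hz.2 hzU)
  obtain ⟨htzF, hcti⟩ := mem_colorClass_iff.1 (htz.2 htzU)
  have hodd : (c ⟨shift t z, htzF⟩ : ℕ) = (c ⟨z, hzF⟩ + (2 * w + 1)) % 2 :=
    coloring_shift_mul hproper ⟨z, hzF⟩ (2 * w + 1)
  rw [hcti, hci] at hodd
  omega

theorem three_le_of_isBorelColoring {A : Finset ℕ} {a k : ℕ} (ha : a ∈ A) (ha0 : 0 < a)
    {c : {x : ℤ → Bool // x ∈ FreePart} → Fin k} (hc : IsBorelColoring A c) : 3 ≤ k := by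
  obtain ⟨x, hx⟩ := (dense_of_mem_residual freePart_mem_residual).nonempty
  by_contra! hk
  interval_cases k
  · exact (c ⟨x, hx⟩).elim0
  · exact hc.2 ⟨x, hx⟩ a ha (shift_mem_freePart hx a) (Subsingleton.elim _ _)
  · obtain ⟨y, hy, hcy⟩ := exists_color_shift_eq ha0 hc.1
    exact hc.2 y a ha hy hcy

end ShiftGraph

open ShiftGraph in
theorem borelChromatic_eq_three_of_max_lt_two_min_general
    (A : Finset ℕ) (hA : A.Nonempty) (hpos : ∀ a ∈ A, 0 < a)
    (hlt : A.max' hA < 2 * A.min' hA) :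
    borelChromatic A = 3 := by
  have hmin := A.min'_mem hA
  obtain ⟨c, hc⟩ := exists_isBorelColoring_three fun a ha =>
    ⟨A.min'_le a ha, (A.le_max' a ha).trans_lt hlt⟩
  refine le_antisymm (Nat.sInf_le ⟨c, hc⟩) (le_csInf ⟨3, c, hc⟩ ?_)
  rintro k ⟨c', hc'⟩
  exact three_le_of_isBorelColoring hmin (hpos _ hmin) hc'

/-- If `aₙ < 2·a₁`, then `χ(a₁,…,aₙ) = 3`. -/
theorem borelChromatic_eq_three_of_max_lt_two_min
    (A : Finset ℕ) (hA : A.Nonempty) (hpos : ∀ a ∈ A, 0 < a) (hgcd : A.gcd id = 1)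
    (hlt : A.max' hA < 2 * A.min' hA) :
    borelChromatic A = 3 :=
  borelChromatic_eq_three_of_max_lt_two_min_general A hA hpos hlt
end
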